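/- arXiv:2005.06951 — 2 statements merged into one kernel-verified Lean document; each statement's English description precedes it below -/
import Mathlib

section
/- Let α, β, η be real constants with β ≠ 0, η ≠ 0, α ≠ -1, and suppose (α+β+1)/β is not a nonpositive integer. Then for x > 0, the derivative with respect to x of F(x) = (x^{α+1} e^{η x^β} / (α+1)) · ₁F₁(1; (α+β+1)/β; -η x^β) equals x^α e^{η x^β}. That is, F is an antiderivative of x^α e^{η x^β} on (0, ∞). -/
noncomputable def poch (x : ℝ) (n : ℕ) : ℝ := ∏ i ∈ Finset.range n, (x + i)

noncomputable def oneFone (a b x : ℝ) : ℝ :=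
  ∑' n : ℕ, poch a n / poch b n * x ^ n / (n.factorial : ℝ)

/-!
Write `M(u) = ₁F₁(1; b; u) = ∑ uⁿ / (b)ₙ`. Since `(b - 1 + n) / (b)ₙ = 1 / (b)ₙ₋₁` for `n ≥ 1`,
termwise differentiation gives the first-order form `u M' + (b - 1 - u) M = b - 1` of Kummer's
equation. With `b = (α + β + 1) / β` we have `α + 1 = β (b - 1)`, and the chain rule applied to
`F(x) = x^(α+1) e^(η x^β) M(-η x^β) / (α + 1)` turns exactly this equation into
`F' = x^α e^(η x^β)`.
-/

open Filter

lemma poch_zero (x : ℝ) : poch x 0 = 1 := by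
  simp [poch]

lemma poch_succ (x : ℝ) (n : ℕ) : poch x (n + 1) = poch x n * (x + n) := by
  simp [poch, Finset.prod_range_succ]

lemma poch_one (n : ℕ) : poch 1 n = n.factorial := by
  induction n with
  | zero => simp [poch]
  | succ n ih => rw [poch_succ, ih, Nat.factorial_succ]; push_cast; ring

section NotNonposInt

variable {b : ℝ} (hb : ∀ k : ℕ, b ≠ -(k : ℝ))
include hb

lemma add_natCast_ne_zero (n : ℕ) : b + n ≠ 0 :=
  fun h => hb n (by linarith)

lemma poch_ne_zero (n : ℕ) : poch b n ≠ 0 :=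
  Finset.prod_ne_zero_iff.2 fun i _ => add_natCast_ne_zero hb i

lemma oneFone_one_eq_tsum (u : ℝ) : oneFone 1 b u = ∑' n : ℕ, u ^ n / poch b n := by
  refine tsum_congr fun n => ?_
  have := poch_ne_zero hb n
  rw [poch_one]
  field_simp

/-- Ratio test: eventually `4 |u| ≤ |b + n|`, and then consecutive terms shrink by half. -/
lemma summable_succ_mul_pow_div_poch (u : ℝ) :
    Summable fun n : ℕ => ((n : ℝ) + 1) * u ^ n / poch b n := by
  refine summable_of_ratio_norm_eventually_le (r := 1 / 2) (by norm_num) ?_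
  filter_upwards [eventually_ge_atTop ⌈4 * |u| + |b|⌉₊] with n hn
  have hbn : 4 * |u| ≤ |b + n| := by
    have := Nat.ceil_le.1 hn
    have := neg_abs_le b
    exact le_trans (by linarith) (le_abs_self _)
  have hpoch : 0 < |poch b n| := abs_pos.2 (poch_ne_zero hb n)
  have hbn0 : 0 < |b + n| := abs_pos.2 (add_natCast_ne_zero hb n)
  simp only [Real.norm_eq_abs, poch_succ, pow_succ, abs_div, abs_mul, abs_pow]
  rw [← mul_div_assoc, div_le_div_iff₀ (by positivity) hpoch]
  push_cast
  rw [abs_of_pos (by positivity : (0 : ℝ) < n + 1 + 1),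
    abs_of_pos (by positivity : (0 : ℝ) < n + 1)]
  have hn2 : (n : ℝ) + 1 + 1 ≤ 2 * ((n : ℝ) + 1) := by linarith
  calc ((n : ℝ) + 1 + 1) * (|u| ^ n * |u|) * |poch b n|
      ≤ (2 * ((n : ℝ) + 1)) * (|u| ^ n * |u|) * |poch b n| := by gcongr
    _ = ((n + 1) * |u| ^ n * |poch b n|) * (2 * |u|) := by ring
    _ ≤ ((n + 1) * |u| ^ n * |poch b n|) * (|b + n| / 2) := by gcongr; linarith
    _ = 1 / 2 * ((n + 1) * |u| ^ n) * (|poch b n| * |b + n|) := by ring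

lemma summable_pow_div_poch (u : ℝ) : Summable fun n : ℕ => u ^ n / poch b n := by
  refine (summable_succ_mul_pow_div_poch hb u).norm.of_norm_bounded fun n => ?_
  rw [mul_div_assoc, norm_mul, Real.norm_of_nonneg (by positivity : (0 : ℝ) ≤ n + 1)]
  exact le_mul_of_one_le_left (norm_nonneg _) (by linarith [n.cast_nonneg (α := ℝ)])

lemma summable_natCast_mul_pow_div_poch (u : ℝ) :
    Summable fun n : ℕ => (n : ℝ) * u ^ n / poch b n := by
  refine (summable_succ_mul_pow_div_poch hb u).norm.of_norm_bounded fun n => ?_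
  rw [mul_div_assoc, mul_div_assoc, norm_mul, norm_mul]
  gcongr
  rw [Real.norm_natCast, Real.norm_of_nonneg (by positivity)]
  linarith

lemma hasDerivAt_oneFone_one (u : ℝ) :
    HasDerivAt (oneFone 1 b) (∑' n : ℕ, (n : ℝ) * u ^ (n - 1) / poch b n) u := by
  obtain ⟨R, hR0, huR⟩ : ∃ R : ℝ, 0 < R ∧ |u| < R := ⟨|u| + 1, by positivity, by linarith⟩
  have hbound : Summable fun n : ℕ => (n : ℝ) * R ^ (n - 1) / |poch b n| := by
    refine ((summable_natCast_mul_pow_div_poch hb R).abs.div_const R).congr fun n => ?_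
    rcases n with _ | m
    · simp
    · rw [abs_div, abs_mul, abs_pow, Nat.abs_cast, abs_of_pos hR0, Nat.add_sub_cancel,
        pow_succ]
      field_simp
  have hM : oneFone 1 b = fun y => ∑' n : ℕ, y ^ n / poch b n :=
    funext (oneFone_one_eq_tsum hb)
  rw [hM]
  refine hasDerivAt_tsum_of_isPreconnected hbound Metric.isOpen_ball
    (convex_ball (0 : ℝ) R).isPreconnected (y₀ := 0)
    (fun n y _ => (hasDerivAt_pow n y).div_const (poch b n)) (fun n y hy => ?_)
    (by simpa using hR0) ?_ (by simpa using huR)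
  · rw [mem_ball_zero_iff, Real.norm_eq_abs] at hy
    rw [Real.norm_eq_abs, abs_div, abs_mul, abs_pow, Nat.abs_cast]
    gcongr
  · refine summable_of_ne_finset_zero (s := {0}) fun n hn => ?_
    simp [zero_pow (Finset.notMem_singleton.1 hn)]

lemma oneFone_one_ode (u : ℝ) :
    u * (∑' n : ℕ, (n : ℝ) * u ^ (n - 1) / poch b n) + (b - 1 - u) * oneFone 1 b u
      = b - 1 := by
  have hS := summable_pow_div_poch hb u
  have hSn := summable_natCast_mul_pow_div_poch hb u
  have hderiv : u * (∑' n : ℕ, (n : ℝ) * u ^ (n - 1) / poch b n)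
      = ∑' n : ℕ, (n : ℝ) * u ^ n / poch b n := by
    rw [← tsum_mul_left]
    refine tsum_congr fun n => ?_
    rcases n with _ | m
    · simp
    · rw [Nat.add_sub_cancel, pow_succ]; ring
  have hshift :
      ∑' n : ℕ, (b - 1 + n) * u ^ n / poch b n = (b - 1) + u * oneFone 1 b u := by
    have hf : Summable fun n : ℕ => (b - 1 + n) * u ^ n / poch b n :=
      ((hS.mul_left (b - 1)).add hSn).congr fun n => by ring
    rw [hf.tsum_eq_zero_add, oneFone_one_eq_tsum hb, ← tsum_mul_left]
    congr 1
    · simp [poch_zero]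
    · refine tsum_congr fun n => ?_
      have := add_natCast_ne_zero hb n
      have := poch_ne_zero hb n
      rw [poch_succ]
      push_cast
      field_simp
      ring
  have hsplit : ∑' n : ℕ, (b - 1 + n) * u ^ n / poch b n
      = (b - 1) * oneFone 1 b u + ∑' n : ℕ, (n : ℝ) * u ^ n / poch b n := by
    rw [oneFone_one_eq_tsum hb, ← tsum_mul_left, ← (hS.mul_left (b - 1)).tsum_add hSn]
    exact tsum_congr fun n => by ring
  linear_combination hderiv - hsplit + hshift

end NotNonposInt

lemma hasDerivAt_rpow_mul_exp_mul_oneFone_one {α β η b : ℝ} (hb : ∀ k : ℕ, b ≠ -(k : ℝ))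
    (hα : α + 1 ≠ 0) (hαβ : β * (b - 1) = α + 1) {x : ℝ} (hx : 0 < x) :
    HasDerivAt
      (fun y : ℝ => y ^ (α + 1) * Real.exp (η * y ^ β) / (α + 1) * oneFone 1 b (-(η * y ^ β)))
      (x ^ α * Real.exp (η * x ^ β)) x := by
  have hxβ : HasDerivAt (fun y : ℝ => y ^ β) (β * x ^ (β - 1)) x :=
    Real.hasDerivAt_rpow_const (Or.inl hx.ne')
  have hxα : HasDerivAt (fun y : ℝ => y ^ (α + 1)) ((α + 1) * x ^ α) x := by
    simpa using Real.hasDerivAt_rpow_const (p := α + 1) (Or.inl hx.ne')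
  have hM : HasDerivAt (fun y : ℝ => oneFone 1 b (-(η * y ^ β)))
      ((∑' n : ℕ, (n : ℝ) * (-(η * x ^ β)) ^ (n - 1) / poch b n) * -(η * (β * x ^ (β - 1)))) x :=
    (hasDerivAt_oneFone_one hb _).comp x (hxβ.const_mul η).neg
  refine (((hxα.mul (hxβ.const_mul η).exp).div_const (α + 1)).mul hM).congr_deriv ?_
  have hode := oneFone_one_ode hb (-(η * x ^ β))
  set M := oneFone 1 b (-(η * x ^ β))
  set E := Real.exp (η * x ^ β)
  simp only [Pi.mul_apply]
  rw [Real.rpow_add_one hx.ne', Real.rpow_sub_one hx.ne']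
  field_simp
  linear_combination β * E * hode - E * (M - 1) * hαβ

theorem stmt_3_general (α β η : ℝ) (hβ : β ≠ 0) (hα : α ≠ -1)
    (hb : ∀ k : ℕ, (α + β + 1) / β ≠ -(k : ℝ)) :
    ∀ x : ℝ, 0 < x →
      HasDerivAt
        (fun y : ℝ =>
          y ^ (α + 1) * Real.exp (η * y ^ β) / (α + 1) *
            oneFone 1 ((α + β + 1) / β) (-(η * y ^ β)))
        (x ^ α * Real.exp (η * x ^ β)) x := by
  intro x hx
  have hα1 : α + 1 ≠ 0 := fun h => hα (by linarith)
  refine hasDerivAt_rpow_mul_exp_mul_oneFone_one hb hα1 ?_ hx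
  field_simp
  ring

theorem stmt_3 (α β η : ℝ) (hβ : β ≠ 0) (hη : η ≠ 0) (hα : α ≠ -1)
    (hb : ∀ k : ℕ, (α + β + 1) / β ≠ -(k : ℝ)) :
    ∀ x : ℝ, 0 < x →
      HasDerivAt
        (fun y : ℝ =>
          y ^ (α + 1) * Real.exp (η * y ^ β) / (α + 1) *
            oneFone 1 ((α + β + 1) / β) (-(η * y ^ β)))
        (x ^ α * Real.exp (η * x ^ β)) x :=
  stmt_3_general α β η hβ hα hb
end

section
/- Let β > 0 (with β such that t ↦ t^β is defined for t ≥ 0, applied to |x-θ|), η > 0, σ > 0, θ ∈ ℝ, and n a natural number. For the density f(x) = (β/(2σ)) · (η^{1/β}/Γ(1/β)) · exp(-η(|x-θ|/σ)^β) on ℝ, the n-th moment is ∫_ℝ x^n f(x) dx = (θ^n/Γ(1/β)) · Σ_{l=0}^{⌊n/2⌋} Γ((2l+1)/β) · C(n, 2l) · (σ/(θ η^{1/β}))^{2l}, where C(n,k) is the binomial coefficient, assuming θ ≠ 0. -/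
/-!
Substituting `y = x - θ` and expanding `(y + θ)^n` binomially reduces the moment to moments of
the even function `exp (-b |y|^β)` with `b = η / σ^β`. Its odd moments vanish, and its even ones
are Gamma integrals after the substitution `t = b y^β` on the half-line.
-/

open MeasureTheory Real Set Finset

theorem Function.Odd.integral_eq_zero {G E : Type*} [MeasurableSpace G] [AddGroup G] [MeasurableNeg G]
    [NormedAddCommGroup E] [NormedSpace ℝ E] {μ : Measure G} [μ.IsNegInvariant] {f : G → E}
    (hf : f.Odd) : ∫ x, f x ∂μ = 0 := by
  have h := integral_neg_eq_self f μ
  simp only [hf _, integral_neg] at h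
  have : (2 : ℝ) • ∫ x, f x ∂μ = 0 := by rw [two_smul]; nth_rw 1 [← h]; exact neg_add_cancel _
  exact (smul_eq_zero.mp this).resolve_left two_ne_zero

theorem Finset.sum_range_succ_eq_sum_even {M : Type*} [AddCommMonoid M] (n : ℕ) (g : ℕ → M)
    (hg : ∀ k, Odd k → g k = 0) :
    ∑ k ∈ range (n + 1), g k = ∑ l ∈ range (n / 2 + 1), g (2 * l) := by
  rw [← sum_filter_of_ne (p := Even) fun k _ hk => Nat.not_odd_iff_even.mp (mt (hg k) hk)]
  refine sum_nbij' (· / 2) (2 * ·) ?_ ?_ ?_ ?_ fun k hk => congrArg g ?_ <;>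
    simp only [mem_filter, mem_range, Nat.even_iff] at * <;> omega

theorem integrable_comp_abs_of_integrableOn_Ioi {E : Type*} [NormedAddCommGroup E] {g : ℝ → E}
    (hg : IntegrableOn g (Ioi 0)) : Integrable fun x => g |x| := by
  have hIoi : IntegrableOn (fun x => g |x|) (Ioi 0) :=
    hg.congr_fun (fun x hx => by rw [abs_of_pos hx]) measurableSet_Ioi
  have hIic : IntegrableOn (fun x => g |x|) (Iic 0) := by
    have := ((integrableOn_Ici_iff_integrableOn_Ioi enorm_ne_top).mpr hIoi).comp_neg
    simpa only [abs_neg, neg_Ici, neg_zero] using this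
  simpa only [Iic_union_Ioi, integrableOn_univ] using hIic.union hIoi

theorem integrable_pow_mul_exp_neg_mul_abs_rpow {b p : ℝ} (hb : 0 < b) (hp : 0 < p) (k : ℕ) :
    Integrable fun x : ℝ => x ^ k * exp (-b * |x| ^ p) := by
  have hk : (-1 : ℝ) < k := neg_one_lt_zero.trans_le k.cast_nonneg
  refine (integrable_comp_abs_of_integrableOn_Ioi
    (integrableOn_rpow_mul_exp_neg_mul_rpow hk hp hb)).mono' ?_ (.of_forall fun x => ?_)
  · exact Continuous.aestronglyMeasurable <| (continuous_pow k).mul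
      (continuous_const.mul (continuous_abs.rpow_const fun _ => Or.inr hp.le)).rexp
  · rw [norm_mul, norm_pow, Real.norm_eq_abs, Real.norm_eq_abs, abs_exp, rpow_natCast]

theorem integral_abs_rpow_mul_exp_neg_mul_abs_rpow {p q b : ℝ} (hp : 0 < p) (hq : -1 < q)
    (hb : 0 < b) :
    ∫ x, |x| ^ q * exp (-b * |x| ^ p) = 2 * (b ^ (-(q + 1) / p) * (1 / p) * Gamma ((q + 1) / p)) := by
  rw [integral_comp_abs (f := fun x => x ^ q * exp (-b * x ^ p)),
    integral_rpow_mul_exp_neg_mul_rpow hp hq hb]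

theorem integral_pow_mul_comp_sub_of_even {g : ℝ → ℝ} (hg : g.Even)
    (hint : ∀ k : ℕ, Integrable fun y => y ^ k * g y) (θ : ℝ) (n : ℕ) :
    ∫ x, x ^ n * g (x - θ) =
      ∑ l ∈ range (n / 2 + 1), θ ^ (n - 2 * l) * n.choose (2 * l) * ∫ y, y ^ (2 * l) * g y := by
  have hodd : ∀ k, Odd k → ∫ y, y ^ k * g y = 0 := fun k hk =>
    Function.Odd.integral_eq_zero fun y => by rw [hk.neg_pow, hg y, neg_mul]
  calc ∫ x, x ^ n * g (x - θ) = ∫ y, (y + θ) ^ n * g y := by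
        simpa using (integral_add_right_eq_self (fun x => x ^ n * g (x - θ)) θ).symm
    _ = ∑ k ∈ range (n + 1), θ ^ (n - k) * n.choose k * ∫ y, y ^ k * g y := by
        simp_rw [add_pow, sum_mul]
        rw [integral_finsetSum _ fun k _ => (hint k).const_mul (θ ^ (n - k) * n.choose k)|>.congr
          (.of_forall fun y => by ring)]
        exact sum_congr rfl fun k _ => by rw [← integral_const_mul]; congr 1; ext y; ring
    _ = _ := sum_range_succ_eq_sum_even n _ fun k hk => by rw [hodd k hk, mul_zero]

theorem div_rpow_rpow_neg_div {a c p : ℝ} (ha : 0 < a) (hc : 0 < c) (hp : p ≠ 0) (s : ℝ) :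
    (a / c ^ p) ^ (-s / p) = (c / a ^ (1 / p)) ^ s := by
  have ha' : a = (a ^ (1 / p)) ^ p := by rw [← rpow_mul ha.le, one_div_mul_cancel hp, rpow_one]
  rw [ha', ← div_rpow (by positivity) hc.le, ← rpow_mul (by positivity), ← ha',
    mul_div_cancel₀ _ hp, rpow_neg (by positivity), ← inv_rpow (by positivity), inv_div]

theorem Even.integral_pow_mul_exp_neg_mul_abs_rpow {k : ℕ} (hk : Even k) {p a c : ℝ}
    (hp : 0 < p) (ha : 0 < a) (hc : 0 < c) :
    ∫ y, y ^ k * exp (-(a / c ^ p) * |y| ^ p) =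
      2 * ((c / a ^ (1 / p)) ^ (k + 1) * (1 / p) * Gamma ((k + 1) / p)) := by
  have hq : (-1 : ℝ) < k := neg_one_lt_zero.trans_le k.cast_nonneg
  have hpow : ∀ y : ℝ, y ^ k = |y| ^ (k : ℝ) := fun y => by rw [rpow_natCast, hk.pow_abs]
  simp_rw [hpow]
  rw [integral_abs_rpow_mul_exp_neg_mul_abs_rpow hp hq (by positivity),
    div_rpow_rpow_neg_div ha hc hp.ne']
  norm_cast

theorem stmt_18 (β η σ θ : ℝ) (hβ : 0 < β) (hη : 0 < η) (hσ : 0 < σ) (hθ : θ ≠ 0)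
    (n : ℕ)
    (f : ℝ → ℝ)
    (hf : f = fun x : ℝ =>
      β / (2 * σ) * (η ^ (1 / β) / Real.Gamma (1 / β)) *
        Real.exp (-η * (|x - θ| / σ) ^ β)) :
    ∫ x : ℝ, x ^ n * f x =
      θ ^ n / Real.Gamma (1 / β) *
        ∑ l ∈ Finset.range (n / 2 + 1),
          Real.Gamma ((2 * l + 1) / β) * (n.choose (2 * l) : ℝ) *
            (σ / (θ * η ^ (1 / β))) ^ (2 * l) := by
  have hf' : ∀ x, x ^ n * f x = β / (2 * σ) * (η ^ (1 / β) / Gamma (1 / β)) *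
      (x ^ n * exp (-(η / σ ^ β) * |x - θ| ^ β)) := fun x => by
    have hexp : -η * (|x - θ| / σ) ^ β = -(η / σ ^ β) * |x - θ| ^ β := by
      rw [div_rpow (abs_nonneg _) hσ.le]
      ring
    simp only [hf, hexp]
    ring
  simp_rw [hf', integral_const_mul]
  rw [integral_pow_mul_comp_sub_of_even (fun y => by rw [abs_neg])
    (integrable_pow_mul_exp_neg_mul_abs_rpow (by positivity) hβ) θ n, mul_sum, mul_sum]
  refine sum_congr rfl fun l hl => ?_
  have hln : 2 * l ≤ n := by rw [Finset.mem_range] at hl; omega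
  rw [(even_two_mul l).integral_pow_mul_exp_neg_mul_abs_rpow hβ hη hσ, ← pow_sub_mul_pow θ hln]
  have hG : Gamma (1 / β) ≠ 0 := (Gamma_pos_of_pos (by positivity)).ne'
  have hA : η ^ (1 / β) ≠ 0 := (rpow_pos_of_pos hη _).ne'
  rw [div_pow, div_pow, mul_pow]
  push_cast
  field_simp
  ring
end
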